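/- For every integer n ≥ 1, the 2-rank of the compact symplectic group Sp(n), realized as the group of n×n quaternionic matrices A with A·A* = I (the quaternionic unitary group), equals n. -/

import Mathlib

/-- The set of natural numbers `r` such that the group `G` contains a subgroup isomorphic to
the elementary abelian 2-group `(ℤ/2ℤ)^r`. -/
def elementaryTwoRanks (G : Type*) [Group G] : Set ℕ :=
  {r | ∃ H : Subgroup G, Nonempty (H ≃* Multiplicative (Fin r → ZMod 2))}

/-- The 2-rank `r₂(G)` of a group `G`: the supremum of the integers `r` such that `G` contains
a subgroup isomorphic to the elementary abelian 2-group `(ℤ/2ℤ)^r`. -/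
noncomputable def twoRank (G : Type*) [Group G] : ℕ :=
  sSup (elementaryTwoRanks G)

/-- The compact symplectic group `Sp(n)`: the group of `n × n` quaternionic matrices `A` with
`A * star A = 1`, i.e. the unitary group of the quaternionic matrix algebra. -/
noncomputable abbrev SpGroup (n : ℕ) := unitary (Matrix (Fin n) (Fin n) (Quaternion ℝ))

/-!
A faithful action of `E = (ℤ/2)^r` on `ℍⁿ` splits, over the Walsh characters of `E`, into
isotypic components cut out by complete orthogonal idempotents of `Mₙ(ℍ)`. Faithfulness forces
the characters with a nonzero component to separate the points of `E`, so there are at least `r`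
of them; nonzero orthogonal idempotents of `Mₙ(ℍ)` have linearly independent rows, so there are
at most `n`. The diagonal sign matrices give the lower bound.
-/

open Matrix

def signChar : AddChar (ZMod 2) ℤ := AddChar.zmodChar 2 (ζ := -1) (by norm_num)

lemma signChar_one : signChar 1 = -1 := by
  simp [signChar, AddChar.zmodChar_apply, ZMod.val_one]

lemma signChar_mul_self (x : ZMod 2) : signChar x * signChar x = 1 := by
  rw [← AddChar.map_add_eq_mul, CharTwo.add_self_eq_zero, AddChar.map_zero_eq_one]

lemma intCast_signChar_injective (D : Type*) [Ring D] [NeZero (2 : D)] :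
    Function.Injective fun x => (signChar x : D) := by
  have h : (-1 : D) ≠ 1 := by
    intro h
    apply two_ne_zero (α := D)
    rw [← one_add_one_eq_two]; nth_rw 1 [← h]; exact neg_add_cancel 1
  have two_cases : ∀ x : ZMod 2, x = 0 ∨ x = 1 := by decide
  intro x y
  obtain rfl | rfl := two_cases x <;> obtain rfl | rfl := two_cases y <;>
    simp [signChar_one, h, h.symm]

section Walsh

variable {ι : Type*} [Fintype ι]

def walshChar (δ : ι → ZMod 2) : AddChar (ι → ZMod 2) ℤ where
  toFun s := signChar (δ ⬝ᵥ s)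
  map_zero_eq_one' := by simp
  map_add_eq_mul' s t := by rw [dotProduct_add, AddChar.map_add_eq_mul]

lemma walshChar_apply (δ s : ι → ZMod 2) : walshChar δ s = signChar (δ ⬝ᵥ s) := rfl

lemma walshChar_mul_self (δ s : ι → ZMod 2) : walshChar δ s * walshChar δ s = 1 :=
  signChar_mul_self _

lemma walshChar_comm (δ s : ι → ZMod 2) : walshChar δ s = walshChar s δ := by
  rw [walshChar_apply, walshChar_apply, dotProduct_comm]

lemma walshChar_add_left (δ δ' s : ι → ZMod 2) :
    walshChar (δ + δ') s = walshChar δ s * walshChar δ' s := by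
  rw [walshChar_comm, AddChar.map_add_eq_mul, walshChar_comm, walshChar_comm s]

variable [DecidableEq ι]

-- `0 : AddChar _ _` is the trivial character.
lemma walshChar_eq_zero_iff {δ : ι → ZMod 2} : walshChar δ = 0 ↔ δ = 0 := by
  refine ⟨fun h => funext fun i => ?_, fun h => AddChar.eq_zero_iff.mpr fun s => ?_⟩
  · have := AddChar.eq_zero_iff.mp h (Pi.single i 1)
    rw [walshChar_apply, dotProduct_single, mul_one, ← AddChar.map_zero_eq_one signChar] at this
    exact intCast_signChar_injective ℤ (by simpa using this)
  · simp [h, walshChar_apply]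

lemma sum_walshChar (δ : ι → ZMod 2) :
    ∑ s, walshChar δ s = if δ = 0 then 2 ^ Fintype.card ι else 0 := by
  rw [AddChar.sum_eq_ite]
  simp [walshChar_eq_zero_iff, ZMod.card]

lemma sum_walshChar_left (s : ι → ZMod 2) :
    ∑ δ, walshChar δ s = if s = 0 then 2 ^ Fintype.card ι else 0 := by
  simp only [walshChar_comm _ s, sum_walshChar]

end Walsh

section Idempotents

variable {ι F A : Type*} [Fintype ι] [DecidableEq ι] [Field F] [Ring A] [Algebra F A]
  (ρ : Multiplicative (ι → ZMod 2) →* A)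

variable (F) in
def walshIdempotent (δ : ι → ZMod 2) : A :=
  (2 ^ Fintype.card ι : F)⁻¹ • ∑ s, walshChar δ s • ρ (.ofAdd s)

lemma mul_walshIdempotent (t δ : ι → ZMod 2) :
    ρ (.ofAdd t) * walshIdempotent F ρ δ = walshChar δ t • walshIdempotent F ρ δ := by
  rw [walshIdempotent, mul_smul_comm, smul_comm (walshChar δ t) (_ : F)]
  congr 1
  rw [Finset.mul_sum, Finset.smul_sum]
  refine Fintype.sum_equiv (Equiv.addLeft t) _ _ fun s => ?_
  rw [mul_smul_comm, ← map_mul, ← ofAdd_add, Equiv.coe_addLeft, smul_smul,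
    AddChar.map_add_eq_mul, ← mul_assoc, walshChar_mul_self, one_mul]

variable [NeZero (2 : F)]

lemma walshIdempotent_mul (δ δ' : ι → ZMod 2) :
    walshIdempotent F ρ δ * walshIdempotent F ρ δ' =
      if δ = δ' then walshIdempotent F ρ δ' else 0 := by
  have h : walshIdempotent F ρ δ * walshIdempotent F ρ δ' =
      (2 ^ Fintype.card ι : F)⁻¹ • (∑ s, walshChar (δ + δ') s) • walshIdempotent F ρ δ' := by
    rw [walshIdempotent, smul_mul_assoc, Finset.sum_mul]
    simp only [smul_mul_assoc, mul_walshIdempotent, smul_smul, ← walshChar_add_left,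
      ← Finset.sum_smul]
  have hδ : δ + δ' = 0 ↔ δ = δ' := by simp [funext_iff, CharTwo.add_eq_zero]
  simp only [h, sum_walshChar, hδ]
  split_ifs
  · rw [← Int.cast_smul_eq_zsmul F]
    push_cast
    exact inv_smul_smul₀ (pow_ne_zero _ two_ne_zero) _
  · rw [zero_smul, smul_zero]

lemma sum_walshIdempotent : ∑ δ, walshIdempotent F ρ δ = 1 := by
  simp only [walshIdempotent, ← Finset.smul_sum]
  rw [Finset.sum_comm]
  simp only [← Finset.sum_smul, sum_walshChar_left, ite_smul, zero_smul, Finset.sum_ite_eq',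
    Finset.mem_univ, if_true, ofAdd_zero, map_one]
  rw [← Int.cast_smul_eq_zsmul F]
  push_cast
  exact inv_smul_smul₀ (pow_ne_zero _ two_ne_zero) _

lemma completeOrthogonalIdempotents_walshIdempotent :
    CompleteOrthogonalIdempotents (walshIdempotent F ρ) :=
  CompleteOrthogonalIdempotents.iff_ortho_complete.mpr
    ⟨fun δ δ' h => (walshIdempotent_mul ρ δ δ').trans (if_neg h), sum_walshIdempotent ρ⟩

theorem card_le_card_walshIdempotent_ne_zero (hρ : Function.Injective ρ) :
    Fintype.card ι ≤ Nat.card {δ // walshIdempotent F ρ δ ≠ 0} := by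
  classical
  let M : Matrix {δ // walshIdempotent F ρ δ ≠ 0} ι (ZMod 2) := Matrix.of fun δ => δ.1
  have hM : Function.Injective M.mulVecLin := by
    rw [← LinearMap.ker_eq_bot, LinearMap.ker_eq_bot']
    intro s hs
    have hρs : ρ (.ofAdd s) = 1 := calc
      ρ (.ofAdd s) = ρ (.ofAdd s) * ∑ δ, walshIdempotent F ρ δ := by
        rw [sum_walshIdempotent, mul_one]
      _ = ∑ δ, walshIdempotent F ρ δ := by
        rw [Finset.mul_sum]
        refine Finset.sum_congr rfl fun δ _ => ?_
        rw [mul_walshIdempotent]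
        by_cases hδ : walshIdempotent F ρ δ = 0
        · rw [hδ, smul_zero]
        · have : δ ⬝ᵥ s = 0 := congrFun hs ⟨δ, hδ⟩
          rw [walshChar_apply, this, AddChar.map_zero_eq_one, one_smul]
      _ = 1 := sum_walshIdempotent ρ
    exact Multiplicative.ofAdd.injective (hρ (hρs.trans ρ.map_one.symm))
  simpa [Nat.card_eq_fintype_card] using LinearMap.finrank_le_finrank_of_injective hM

end Idempotents

theorem Matrix.card_le_of_orthogonalIdempotents {m J D : Type*} [Fintype m] [DecidableEq m]
    [Finite J] [DivisionRing D] {e : J → Matrix m m D} (he : OrthogonalIdempotents e)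
    (hne : ∀ j, e j ≠ 0) : Nat.card J ≤ Fintype.card m := by
  classical
  have := Fintype.ofFinite J
  have : ∀ j, ∃ k, (e j).row k ≠ 0 := fun j => by
    by_contra! h
    exact hne j (Matrix.ext fun k l => congrFun (h k) l)
  choose k hk using this
  have hrow : ∀ i j, (e i).row (k i) ᵥ* e j = if i = j then (e i).row (k i) else 0 := by
    intro i j
    have h : ∀ M : Matrix m m D, M.row (k i) = Pi.single (k i) 1 ᵥ* M := fun M => by
      rw [single_vecMul, one_smul]
    rw [h, vecMul_vecMul, he.mul_eq]
    split_ifs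
    · rfl
    · exact vecMul_zero _
  have hli : LinearIndependent D fun j => (e j).row (k j) := by
    rw [Fintype.linearIndependent_iff]
    intro c hc j
    have := congrArg (· ᵥ* e j) hc
    simp only [sum_vecMul, smul_vecMul, hrow, smul_ite, smul_zero, Finset.sum_ite_eq',
      Finset.mem_univ, if_true, zero_vecMul] at this
    exact (smul_eq_zero.mp this).resolve_right (hk j)
  simpa [Nat.card_eq_fintype_card] using hli.fintype_card_le_finrank

theorem card_le_of_injective_matrix {ι m F D : Type*} [Fintype ι] [DecidableEq ι] [Fintype m]
    [DecidableEq m] [Field F] [NeZero (2 : F)] [DivisionRing D] [Algebra F D]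
    (ρ : Multiplicative (ι → ZMod 2) →* Matrix m m D) (hρ : Function.Injective ρ) :
    Fintype.card ι ≤ Fintype.card m :=
  (card_le_card_walshIdempotent_ne_zero (F := F) ρ hρ).trans <|
    Matrix.card_le_of_orthogonalIdempotents
      ((completeOrthogonalIdempotents_walshIdempotent ρ).toOrthogonalIdempotents.embedding
        (Function.Embedding.subtype _)) Subtype.prop

def signDiagonal (ι D : Type*) [Fintype ι] [DecidableEq ι] [Ring D] [StarRing D] :
    Multiplicative (ι → ZMod 2) →* unitary (Matrix ι ι D) where
  toFun s := ⟨diagonal fun i => (signChar (s.toAdd i) : D), by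
    rw [Unitary.mem_iff, star_eq_conjTranspose, diagonal_conjTranspose]
    simp [diagonal_mul_diagonal, ← Int.cast_mul, signChar_mul_self]⟩
  map_one' := Subtype.ext <| by
    simp only [toAdd_one, Pi.zero_apply, AddChar.map_zero_eq_one, Int.cast_one, diagonal_one]
    rfl
  map_mul' s t := Subtype.ext <| by
    simp only [toAdd_mul, Pi.add_apply, AddChar.map_add_eq_mul, Int.cast_mul]
    exact (diagonal_mul_diagonal _ _).symm

lemma signDiagonal_injective (ι D : Type*) [Fintype ι] [DecidableEq ι] [Ring D] [StarRing D]
    [NeZero (2 : D)] : Function.Injective (signDiagonal ι D) := by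
  intro s t h
  ext i : 2
  exact intCast_signChar_injective D (congrFun (diagonal_injective (congrArg Subtype.val h)) i)

lemma mem_elementaryTwoRanks_iff {G : Type*} [Group G] {r : ℕ} :
    r ∈ elementaryTwoRanks G ↔ ∃ ρ : Multiplicative (Fin r → ZMod 2) →* G, Function.Injective ρ :=
  ⟨fun ⟨H, ⟨e⟩⟩ => ⟨H.subtype.comp e.symm.toMonoidHom, H.subtype_injective.comp e.symm.injective⟩,
    fun ⟨ρ, hρ⟩ => ⟨ρ.range, ⟨(MonoidHom.ofInjective hρ).symm⟩⟩⟩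

theorem twoRank_Sp_general (n : ℕ) : twoRank (SpGroup n) = n := by
  have : NeZero (2 : Quaternion ℝ) := ⟨by exact_mod_cast Quaternion.coe_injective.ne two_ne_zero⟩
  refine IsGreatest.csSup_eq ⟨mem_elementaryTwoRanks_iff.mpr
    ⟨signDiagonal (Fin n) _, signDiagonal_injective _ _⟩, fun r hr => ?_⟩
  obtain ⟨ρ, hρ⟩ := mem_elementaryTwoRanks_iff.mp hr
  simpa using card_le_of_injective_matrix (F := ℝ) ((unitary _).subtype.comp ρ)
    (Subtype.val_injective.comp hρ)

/-- The 2-rank of the compact symplectic group `Sp(n)` equals `n`. -/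
theorem twoRank_Sp (n : ℕ) (hn : 1 ≤ n) : twoRank (SpGroup n) = n :=
  twoRank_Sp_general n
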